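/- Under the hypotheses that (i) the FaFLSQR vectors satisfy v₁ = (1/(α₁β₁)) A^T r₀ and v_{k+1} = (1/α_{k+1})(A^T u_{k+1} − β_{k+1} v_k) with A z_k = β_{k+1} u_{k+1} + Σ_{j=1}^k n_{j,k} u_j and A^T u_j = α_j v_j + β_j v_{j−1}, and (ii) the FCGLS vectors satisfy s₀ = A^T r₀ and s_k = s_{k−1} − γ_{k−1} A^T q_{k−1}, then v_{k+1} ∈ span{v₁,…,v_k, A^T A M_k^{−1} v_k} and s_k ∈ span{s₀,…,s_{k−1}, A^T A M_k^{−1} s_{k−1}}. -/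

import Mathlib

/-!
Both relations follow from applying `Aᵀ` to the defining recurrence of the new `A`-side vector
(`u_{k+1}` resp. `q_{k-1}`): its `Aᵀ`-image is `AᵀA` times the preconditioned previous vector plus
a combination of earlier `Aᵀu_j` (resp. `Aᵀq_j`), and those already lie in the span by the
three-term relations `Aᵀu_j = α_j v_j + β_j v_{j-1}` and `Aᵀq_j = γ_j⁻¹ (s_j - s_{j+1})`.
-/

open Matrix Submodule

section

variable {K : Type*} [Field K] {ι κ : Type*} [Fintype ι] [Fintype κ] (A : Matrix ι κ K)

theorem mulVec_mem_comap_transpose_iff {S : Submodule K (κ → K)} {x : κ → K} :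
    A *ᵥ x ∈ S.comap Aᵀ.mulVecLin ↔ (Aᵀ * A) *ᵥ x ∈ S := by
  rw [mem_comap, mulVecLin_apply, mulVec_mulVec]

theorem mem_span_range_succ_union {E : Type*} [AddCommGroup E] [Module K E] (f : ℕ → E)
    (T : Set E) {k i : ℕ} (hi₁ : 1 ≤ i) (hik : i ≤ k) :
    f i ∈ span K ((Set.range fun j : Fin k => f (j + 1)) ∪ T) := by
  refine subset_span (Or.inl ⟨⟨i - 1, by omega⟩, ?_⟩)
  simp only [Nat.sub_add_cancel hi₁]

theorem mem_span_of_faflsqr_recurrence {k : ℕ} (P : Matrix κ κ K)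
    (u : ℕ → ι → K) (v : ℕ → κ → K) (α β nc : ℕ → K) (hβ : β (k + 1) ≠ 0) (hv0 : v 0 = 0)
    (hvk : v (k + 1) = (α (k + 1))⁻¹ • (Aᵀ *ᵥ u (k + 1) - β (k + 1) • v k))
    (hAz : A *ᵥ (P *ᵥ v k) = β (k + 1) • u (k + 1) + ∑ j ∈ Finset.Icc 1 k, nc j • u j)
    (hATu : ∀ j, 1 ≤ j → j ≤ k → Aᵀ *ᵥ u j = α j • v j + β j • v (j - 1)) :
    v (k + 1) ∈ span K ((Set.range fun i : Fin k => v (i + 1)) ∪ {(Aᵀ * A) *ᵥ (P *ᵥ v k)}) := by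
  set S := span K ((Set.range fun i : Fin k => v (i + 1)) ∪ {(Aᵀ * A) *ᵥ (P *ᵥ v k)})
  have hv : ∀ i ≤ k, v i ∈ S := by
    intro i hik
    rcases Nat.eq_zero_or_pos i with rfl | hi
    · exact hv0 ▸ S.zero_mem
    · exact mem_span_range_succ_union v _ hi hik
  set S' := S.comap Aᵀ.mulVecLin
  have hu : ∀ j ∈ Finset.Icc 1 k, u j ∈ S' := by
    intro j hj
    obtain ⟨hj₁, hjk⟩ := Finset.mem_Icc.mp hj
    change Aᵀ *ᵥ u j ∈ S
    rw [hATu j hj₁ hjk]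
    exact add_mem (smul_mem _ _ (hv j hjk)) (smul_mem _ _ (hv (j - 1) (by omega)))
  have hAPv : A *ᵥ (P *ᵥ v k) ∈ S' :=
    (mulVec_mem_comap_transpose_iff A).mpr (subset_span (Or.inr rfl))
  have hu_succ : u (k + 1) ∈ S' := by
    rw [← smul_mem_iff S' hβ, eq_sub_of_add_eq hAz.symm]
    exact sub_mem hAPv (sum_mem fun j hj => smul_mem _ _ (hu j hj))
  rw [hvk]
  exact smul_mem _ _ (sub_mem hu_succ (smul_mem _ _ (hv k le_rfl)))

theorem mem_span_of_fcgls_recurrence {k : ℕ} (hk : 1 ≤ k) (P : Matrix κ κ K)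
    (s : ℕ → κ → K) (q : ℕ → ι → K) (γ θ : ℕ → K)
    (hsk : s k = s (k - 1) - γ (k - 1) • Aᵀ *ᵥ q (k - 1))
    (hqk : q (k - 1) = A *ᵥ (P *ᵥ s (k - 1)) + ∑ j ∈ Finset.range (k - 1), θ j • q j)
    (hATq : ∀ j, j ≤ k - 2 → Aᵀ *ᵥ q j = (γ j)⁻¹ • (s j - s (j + 1))) :
    s k ∈ span K ((Set.range fun i : Fin k => s i) ∪ {(Aᵀ * A) *ᵥ (P *ᵥ s (k - 1))}) := by
  set S := span K ((Set.range fun i : Fin k => s i) ∪ {(Aᵀ * A) *ᵥ (P *ᵥ s (k - 1))})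
  have hs : ∀ i < k, s i ∈ S := fun i hi => subset_span (Or.inl ⟨⟨i, hi⟩, rfl⟩)
  set S' := S.comap Aᵀ.mulVecLin
  have hq : ∀ j ∈ Finset.range (k - 1), q j ∈ S' := by
    intro j hj
    have hjk := Finset.mem_range.mp hj
    change Aᵀ *ᵥ q j ∈ S
    rw [hATq j (by omega)]
    exact smul_mem _ _ (sub_mem (hs j (by omega)) (hs (j + 1) (by omega)))
  have hq_last : q (k - 1) ∈ S' := by
    rw [hqk]
    exact add_mem ((mulVec_mem_comap_transpose_iff A).mpr (subset_span (Or.inr rfl)))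
      (sum_mem fun j hj => smul_mem _ _ (hq j hj))
  rw [hsk]
  exact sub_mem (hs (k - 1) (by omega)) (smul_mem _ _ hq_last)

end

theorem stmt11_general {m n : ℕ} (A : Matrix (Fin m) (Fin n) ℝ)
    (M : ℕ → Matrix (Fin n) (Fin n) ℝ)
    (u : ℕ → Fin m → ℝ) (v z : ℕ → Fin n → ℝ)
    (s shat : ℕ → Fin n → ℝ) (q : ℕ → Fin m → ℝ)
    (α β γ : ℕ → ℝ) (nc θ : ℕ → ℕ → ℝ) (k : ℕ) (hk : 1 ≤ k)
    (hβ : ∀ i, β i ≠ 0)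
    (hv0 : v 0 = 0)
    (hz : ∀ i, 1 ≤ i → z i = (M i)⁻¹.mulVec (v i))
    (hvk : v (k + 1) = (α (k + 1))⁻¹ • (Aᵀ.mulVec (u (k + 1)) - β (k + 1) • v k))
    (hAz : A.mulVec (z k) = β (k + 1) • u (k + 1) + ∑ j ∈ Finset.Icc 1 k, nc j k • u j)
    (hATu : ∀ j, 1 ≤ j → j ≤ k → Aᵀ.mulVec (u j) = α j • v j + β j • v (j - 1))
    (hshat : ∀ i, shat i = (M (i + 1))⁻¹.mulVec (s i))
    (hsk : s k = s (k - 1) - γ (k - 1) • Aᵀ.mulVec (q (k - 1)))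
    (hqk : q (k - 1) = A.mulVec (shat (k - 1)) + ∑ j ∈ Finset.range (k - 1), θ (k - 1) j • q j)
    (hATq : ∀ j, j ≤ k - 2 → Aᵀ.mulVec (q j) = (γ j)⁻¹ • (s j - s (j + 1))) :
    v (k + 1) ∈ Submodule.span ℝ
        ((Set.range fun i : Fin k => v (i + 1)) ∪
          {(Aᵀ * A).mulVec ((M k)⁻¹.mulVec (v k))}) ∧
    s k ∈ Submodule.span ℝ
        ((Set.range fun i : Fin k => s i) ∪
          {(Aᵀ * A).mulVec ((M k)⁻¹.mulVec (s (k - 1)))}) := by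
  rw [hz k hk] at hAz
  rw [hshat, Nat.sub_add_cancel hk] at hqk
  exact ⟨mem_span_of_faflsqr_recurrence A _ u v α β (nc · k) (hβ _) hv0 hvk hAz hATu,
    mem_span_of_fcgls_recurrence A hk _ s q γ (θ (k - 1)) hsk hqk hATq⟩

/-- span relation (4.3): under the FaFLSQR and FCGLS recurrences,
`v_{k+1} ∈ span{v₁,…,v_k, AᵀA M_k⁻¹ v_k}` and `s_k ∈ span{s₀,…,s_{k−1}, AᵀA M_k⁻¹ s_{k−1}}`. -/
theorem stmt11 {m n : ℕ} (A : Matrix (Fin m) (Fin n) ℝ)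
    (M : ℕ → Matrix (Fin n) (Fin n) ℝ) (hM : ∀ i, (M i).PosDef)
    (u : ℕ → Fin m → ℝ) (v z : ℕ → Fin n → ℝ)
    (s shat : ℕ → Fin n → ℝ) (q : ℕ → Fin m → ℝ) (r0 : Fin m → ℝ)
    (α β γ : ℕ → ℝ) (nc θ : ℕ → ℕ → ℝ) (k : ℕ) (hk : 1 ≤ k)
    (hα : ∀ i, α i ≠ 0) (hβ : ∀ i, β i ≠ 0) (hγ : ∀ i, γ i ≠ 0)
    (hv0 : v 0 = 0)
    (hz : ∀ i, 1 ≤ i → z i = (M i)⁻¹.mulVec (v i))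
    (hv1 : v 1 = (α 1 * β 1)⁻¹ • Aᵀ.mulVec r0)
    (hvk : v (k + 1) = (α (k + 1))⁻¹ • (Aᵀ.mulVec (u (k + 1)) - β (k + 1) • v k))
    (hAz : A.mulVec (z k) = β (k + 1) • u (k + 1) + ∑ j ∈ Finset.Icc 1 k, nc j k • u j)
    (hATu : ∀ j, 1 ≤ j → j ≤ k → Aᵀ.mulVec (u j) = α j • v j + β j • v (j - 1))
    (hs0 : s 0 = Aᵀ.mulVec r0)
    (hshat : ∀ i, shat i = (M (i + 1))⁻¹.mulVec (s i))
    (hsk : s k = s (k - 1) - γ (k - 1) • Aᵀ.mulVec (q (k - 1)))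
    (hqk : q (k - 1) = A.mulVec (shat (k - 1)) + ∑ j ∈ Finset.range (k - 1), θ (k - 1) j • q j)
    (hATq : ∀ j, j ≤ k - 2 → Aᵀ.mulVec (q j) = (γ j)⁻¹ • (s j - s (j + 1))) :
    v (k + 1) ∈ Submodule.span ℝ
        ((Set.range fun i : Fin k => v (i + 1)) ∪
          {(Aᵀ * A).mulVec ((M k)⁻¹.mulVec (v k))}) ∧
    s k ∈ Submodule.span ℝ
        ((Set.range fun i : Fin k => s i) ∪
          {(Aᵀ * A).mulVec ((M k)⁻¹.mulVec (s (k - 1)))}) :=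
  stmt11_general A M u v z s shat q α β γ nc θ k hk hβ hv0 hz hvk hAz hATu hshat hsk hqk hATq
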